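/- Let G be a graph with vertex set [m] and let Δ be its edge complex, consisting of the empty set, the singletons {i} for i ∈ [m], and the edges of G. The map φ_Δ is surjective onto S⪰0^m(G) if and only if G is a forest (contains no cycles). -/

import Mathlib

/-!
Write `w_F` for `γ_F` restricted to the face `F`. Then `φ_Δ(γ) = ∑_F w_F w_Fᵀ`, so the image
consists of positive semidefinite matrices whose off-diagonal support lies in `G`.

If `G` is a forest, a matrix `S` of the cone is taken apart leaf by leaf. Let `p` be a leaf of
the support graph of `S`, with neighbour `q`. The Schur complement `S - (S_pp)⁻¹ (S e_p)(S e_p)ᵀ`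
is positive semidefinite, vanishes on row and column `p`, and has a smaller support graph, so by
induction it equals some `φ_Δ(γ)`. Since its `(p, p)` entry is zero, `w_{pq}` is a multiple of
`e_q`; that part is moved onto the face `{q}`, and the freed face `{p, q}` then carries the
rank-one term, which is supported on `{p, q}`.

If `G` has a cycle with closing edge `pq`, take the signed Laplacian of the cycle with weight
`k - 1` on the other `k - 1` edges and weight `-1` on `pq`. It is positive semidefinite by
Cauchy–Schwarz (telescoping along the cycle), it annihilates the all-ones vector, and its `(p, q)`
entry is `1`. A matrix `φ_Δ(γ)` that annihilates the all-ones vector has every `w_F` orthogonal to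
it, so `γ_{pq,q} = -γ_{pq,p}`, and its `(p, q)` entry `-γ_{pq,p}²` is at most zero.
-/

open Matrix

/-- `Δ` is a simplicial complex with ground set all of `V`: it is closed under
taking subsets and every vertex lies in some face. -/
def IsSimplicialComplex {V : Type*} [Fintype V] [DecidableEq V]
    (Δ : Finset (Finset V)) : Prop :=
  (∀ F ∈ Δ, ∀ F', F' ⊆ F → F' ∈ Δ) ∧ ∀ i : V, ∃ F ∈ Δ, i ∈ F

/-- The parametrization `φ_Δ`, sending `γ = (γ_{i,F})` to the matrix with entries
`φ_Δ(γ)_{ij} = ∑_{F ∈ Δ : i,j ∈ F} γ_{i,F} γ_{j,F}`. -/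
def phi {V : Type*} [Fintype V] [DecidableEq V] (Δ : Finset (Finset V))
    (γ : Finset V → V → ℝ) : Matrix V V ℝ :=
  Matrix.of fun i j => ∑ F ∈ Δ, if i ∈ F ∧ j ∈ F then γ F i * γ F j else 0

/-- The image of the parametrization `φ_Δ`. -/
def phiImage {V : Type*} [Fintype V] [DecidableEq V] (Δ : Finset (Finset V)) :
    Set (Matrix V V ℝ) :=
  Set.range (phi Δ)

/-- The underlying graph `G(Δ)`: its edges are the 2-element faces of `Δ`. -/
def underlyingGraph {V : Type*} [Fintype V] [DecidableEq V]
    (Δ : Finset (Finset V)) : SimpleGraph V where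
  Adj i j := i ≠ j ∧ ({i, j} : Finset V) ∈ Δ
  symm := ⟨fun i j h => ⟨h.1.symm, by rw [Finset.pair_comm]; exact h.2⟩⟩
  loopless := ⟨fun i h => h.1 rfl⟩

/-- The cone `S⪰0^m(G)` of positive semidefinite matrices with zeros at the
non-edges of `G`. -/
def psdCone {V : Type*} [Fintype V] (G : SimpleGraph V) :
    Set (Matrix V V ℝ) :=
  {S | S.PosSemidef ∧ ∀ i j, i ≠ j → ¬ G.Adj i j → S i j = 0}

open Finset SimpleGraph

namespace Matrix

lemma dotProduct_vecMulVec_self_mulVec {n R : Type*} [Fintype n] [CommRing R] (a x : n → R) :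
    x ⬝ᵥ vecMulVec a a *ᵥ x = (a ⬝ᵥ x) ^ 2 := by
  simp [vecMulVec_mulVec, dotProduct_comm x a, sq]

def supportGraph {V R : Type*} [Zero R] (S : Matrix V V R) : SimpleGraph V :=
  SimpleGraph.fromRel fun i j => S i j ≠ 0

variable {V : Type*} {S : Matrix V V ℝ} {p q : V}

lemma supportGraph_adj_iff (hS : S.IsSymm) {i j : V} :
    S.supportGraph.Adj i j ↔ i ≠ j ∧ S i j ≠ 0 := by
  rw [supportGraph, fromRel_adj, hS.apply i j, or_self]

lemma PosSemidef.apply_eq_zero_of_apply_self_eq_zero [Fintype V] [DecidableEq V]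
    (hS : S.PosSemidef) (hp : S p p = 0) (j : V) : S p j = 0 := by
  have hcol : S *ᵥ Pi.single p 1 = 0 := (hS.dotProduct_mulVec_zero_iff _).1 (by simp [hp])
  simpa [mulVec_single_one, (isHermitian_iff_isSymm.1 hS.isHermitian).apply p j] using
    congrFun hcol j

lemma eq_diagonal_of_supportGraph_eq_bot [DecidableEq V] (h : S.supportGraph = ⊥) :
    S = diagonal S.diag := by
  ext i j
  by_cases hij : i = j
  · simp [hij]
  · rw [diagonal_apply_ne _ hij]
    by_contra hS
    have hadj : S.supportGraph.Adj i j := (fromRel_adj _ i j).2 ⟨hij, Or.inl hS⟩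
    simp [h] at hadj

noncomputable def schurComplement (S : Matrix V V ℝ) (p : V) : Matrix V V ℝ :=
  S - (S p p)⁻¹ • vecMulVec (S p) (S p)

lemma schurComplement_apply (i j : V) :
    schurComplement S p i j = S i j - (S p p)⁻¹ * (S p i * S p j) := by
  simp [schurComplement, vecMulVec_apply]

lemma PosSemidef.schurComplement [Fintype V] [DecidableEq V] (hS : S.PosSemidef) (p : V) :
    (Matrix.schurComplement S p).PosSemidef := by
  have hsymm (i j : V) : S j i = S i j := (isHermitian_iff_isSymm.1 hS.isHermitian).apply i j
  set P : Matrix V V ℝ := 1 - (S p p)⁻¹ • vecMulVec (Pi.single p 1) (S p)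
  have hP : Matrix.schurComplement S p = Pᴴ * S * P := by
    ext i j
    simp only [schurComplement_apply, conjTranspose_eq_transpose_of_trivial, transpose_sub,
      transpose_one, transpose_smul, transpose_vecMulVec, sub_mul, one_mul, Algebra.smul_mul_assoc,
      mul_apply, sub_apply, smul_apply, vecMulVec_apply, Pi.single_apply, mul_ite, mul_one,
      mul_zero, hsymm, ite_mul, zero_mul, sum_ite_eq', mem_univ, ↓reduceIte, smul_eq_mul, one_apply,
      mul_sub, sum_sub_distrib, P]
    rcases eq_or_ne (S p p) 0 with h | h
    · simp [h]
    · field_simp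
      ring
  rw [hP]
  exact hS.conjTranspose_mul_mul_same P

lemma schurComplement_apply_pivot_left (hp : S p p ≠ 0) (j : V) :
    schurComplement S p p j = 0 := by
  rw [schurComplement_apply]
  field_simp
  ring

lemma schurComplement_apply_pivot_right (hS : S.IsSymm) (hp : S p p ≠ 0) (i : V) :
    schurComplement S p i p = 0 := by
  rw [schurComplement_apply, ← hS.apply p i]
  field_simp
  ring

lemma schurComplement_apply_ne_zero (hS : S.IsSymm) (hp : S p p ≠ 0)
    (hleaf : ∀ r, r ≠ p → S p r ≠ 0 → r = q) {i j : V} (hij : i ≠ j)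
    (h : schurComplement S p i j ≠ 0) : S i j ≠ 0 := by
  have hip : i ≠ p := fun hip => h (hip ▸ schurComplement_apply_pivot_left hp j)
  have hjp : j ≠ p := fun hjp => h (hjp ▸ schurComplement_apply_pivot_right hS hp i)
  have hprod : S p i * S p j = 0 := by
    by_contra hprod
    obtain ⟨hi, hj⟩ := mul_ne_zero_iff.1 hprod
    exact hij ((hleaf i hip hi).trans (hleaf j hjp hj).symm)
  simpa [schurComplement_apply, hprod] using h

lemma supportGraph_schurComplement_lt (hS : S.IsSymm) (hp : S p p ≠ 0) (hpq : p ≠ q)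
    (hSpq : S p q ≠ 0) (hleaf : ∀ r, r ≠ p → S p r ≠ 0 → r = q) :
    (schurComplement S p).supportGraph < S.supportGraph := by
  refine lt_of_le_not_ge (fun i j hij => ?_) fun hle => ?_
  · rw [supportGraph, fromRel_adj] at hij ⊢
    exact ⟨hij.1, hij.2.imp (schurComplement_apply_ne_zero hS hp hleaf hij.1)
      (schurComplement_apply_ne_zero hS hp hleaf (Ne.symm hij.1))⟩
  · have := hle ((supportGraph_adj_iff hS).2 ⟨hpq, hSpq⟩)
    rw [supportGraph, fromRel_adj] at this
    simp [schurComplement_apply_pivot_left hp, schurComplement_apply_pivot_right hS hp] at this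

end Matrix

namespace SimpleGraph

lemma IsAcyclic.exists_adj_forall_adj_eq {V : Type*} [Finite V] {G : SimpleGraph V}
    (hG : G.IsAcyclic) {a b : V} (hab : G.Adj a b) : ∃ p q, G.Adj p q ∧ ∀ r, G.Adj p r → r = q := by
  have : Nonempty V := ⟨a⟩
  obtain ⟨u, v, w, hw, hmax⟩ := Walk.exists_isPath_forall_isPath_length_le_length G
  have hnil : ¬ w.Nil := fun hnil => by
    simpa [Walk.length_eq_zero_iff.2 hnil] using hmax _ _ hab.toWalk (by simp [hab.ne])
  refine ⟨u, w.snd, w.adj_snd hnil, fun r hr => hG.eq_snd_of_adj_start hw hr ?_⟩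
  by_contra hr'
  simpa using hmax _ _ (w.cons hr.symm) (hw.cons hr')

variable {V : Type*} [DecidableEq V] {G : SimpleGraph V}

def Dart.signedIncVec (d : G.Dart) : V → ℝ := Pi.single d.fst 1 - Pi.single d.snd 1

lemma Dart.signedIncVec_dotProduct [Fintype V] (d : G.Dart) (x : V → ℝ) :
    d.signedIncVec ⬝ᵥ x = x d.fst - x d.snd := by
  simp [signedIncVec, sub_dotProduct]

lemma Dart.signedIncVec_mul_eq_zero (d : G.Dart) {i j : V} (hij : i ≠ j) (h : s(i, j) ≠ d.edge) :
    d.signedIncVec i * d.signedIncVec j = 0 := by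
  have := d.adj.ne
  simp only [signedIncVec, Pi.sub_apply, Pi.single_apply, ne_eq, Sym2.eq_iff, Dart.edge] at *
  grind

lemma Walk.sum_signedIncVec_darts {u v : V} (w : G.Walk u v) :
    (w.darts.map Dart.signedIncVec).sum = Pi.single u 1 - Pi.single v 1 := by
  induction w with
  | nil => simp
  | cons h w ih => simp [ih, Dart.signedIncVec]

lemma Walk.IsCycle.exists_sum_signedIncVec {v : V} {w : G.Walk v v} (hw : w.IsCycle) :
    ∃ (T : Finset G.Dart) (d₀ : G.Dart),
      ∑ d ∈ T, d.signedIncVec = -d₀.signedIncVec ∧ ∀ d ∈ T, d.edge ≠ d₀.edge := by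
  have hnodup : (w.darts.map Dart.edge).Nodup := hw.edges_nodup
  obtain ⟨d₀, hd₀⟩ := List.exists_mem_of_length_pos
    (by rw [Walk.length_darts]; linarith [hw.three_le_length] : 0 < w.darts.length)
  refine ⟨w.darts.toFinset.erase d₀, d₀, ?_, fun d hd hedge => ?_⟩
  · rw [eq_neg_iff_add_eq_zero, Finset.sum_erase_add _ _ (List.mem_toFinset.2 hd₀),
      List.sum_toFinset _ hnodup.of_map, w.sum_signedIncVec_darts, sub_self]
  · obtain ⟨hne, hd⟩ := Finset.mem_erase.1 hd
    exact hne (List.inj_on_of_nodup_map hnodup (List.mem_toFinset.1 hd) hd₀ hedge)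

def cycleMatrix (T : Finset G.Dart) (d₀ : G.Dart) : Matrix V V ℝ :=
  (#T : ℝ) • ∑ d ∈ T, vecMulVec d.signedIncVec d.signedIncVec -
    vecMulVec d₀.signedIncVec d₀.signedIncVec

variable {T : Finset G.Dart} {d₀ : G.Dart}

lemma cycleMatrix_apply (i j : V) :
    cycleMatrix T d₀ i j = #T * ∑ d ∈ T, d.signedIncVec i * d.signedIncVec j -
      d₀.signedIncVec i * d₀.signedIncVec j := by
  simp [cycleMatrix, Matrix.sum_apply, vecMulVec_apply]

lemma dotProduct_cycleMatrix_mulVec [Fintype V] (x : V → ℝ) :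
    x ⬝ᵥ cycleMatrix T d₀ *ᵥ x =
      #T * ∑ d ∈ T, (x d.fst - x d.snd) ^ 2 - (x d₀.fst - x d₀.snd) ^ 2 := by
  simp [cycleMatrix, sub_mulVec, smul_mulVec, Matrix.sum_mulVec, dotProduct_sub, dotProduct_smul,
    dotProduct_sum, dotProduct_vecMulVec_self_mulVec, Dart.signedIncVec_dotProduct]

lemma cycleMatrix_isHermitian : (cycleMatrix T d₀).IsHermitian := by
  ext i j
  simp only [conjTranspose_apply, star_trivial, cycleMatrix_apply, mul_comm]

lemma cycleMatrix_posSemidef [Fintype V] (hsum : ∑ d ∈ T, d.signedIncVec = -d₀.signedIncVec) :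
    (cycleMatrix T d₀).PosSemidef := by
  refine .of_dotProduct_mulVec_nonneg cycleMatrix_isHermitian fun x => ?_
  have hd₀ : x d₀.fst - x d₀.snd = -∑ d ∈ T, (x d.fst - x d.snd) := by
    simp only [← Dart.signedIncVec_dotProduct, ← sum_dotProduct, hsum, neg_dotProduct, neg_neg]
  rw [star_trivial, dotProduct_cycleMatrix_mulVec, hd₀, neg_sq, sub_nonneg]
  exact sq_sum_le_card_mul_sum_sq

lemma one_dotProduct_cycleMatrix_mulVec_one [Fintype V] : 1 ⬝ᵥ cycleMatrix T d₀ *ᵥ 1 = 0 := by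
  simp [dotProduct_cycleMatrix_mulVec]

lemma cycleMatrix_apply_eq_zero {i j : V} (hij : i ≠ j) (hadj : ¬ G.Adj i j) :
    cycleMatrix T d₀ i j = 0 := by
  have hzero (d : G.Dart) : d.signedIncVec i * d.signedIncVec j = 0 :=
    d.signedIncVec_mul_eq_zero hij fun h => hadj (by rw [← mem_edgeSet, h]; exact d.edge_mem)
  simp [cycleMatrix_apply, hzero]

lemma cycleMatrix_apply_fst_snd (hedge : ∀ d ∈ T, d.edge ≠ d₀.edge) :
    cycleMatrix T d₀ d₀.fst d₀.snd = 1 := by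
  have hne := d₀.adj.ne
  rw [cycleMatrix_apply, Finset.sum_eq_zero fun d hd =>
    d.signedIncVec_mul_eq_zero hne fun h => hedge d hd h.symm]
  simp [Dart.signedIncVec, hne, hne.symm]

end SimpleGraph

section Phi

variable {V : Type*} [Fintype V] [DecidableEq V] {Δ : Finset (Finset V)} {γ : Finset V → V → ℝ}

lemma phi_eq_sum_vecMulVec (Δ : Finset (Finset V)) (γ : Finset V → V → ℝ) :
    phi Δ γ = ∑ F ∈ Δ, vecMulVec ((F : Set V).indicator (γ F)) ((F : Set V).indicator (γ F)) := by
  ext i j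
  simp only [phi, of_apply, Matrix.sum_apply, vecMulVec_apply, Set.indicator_apply, Finset.mem_coe,
    ite_zero_mul_ite_zero]

lemma phi_posSemidef (Δ : Finset (Finset V)) (γ : Finset V → V → ℝ) : (phi Δ γ).PosSemidef := by
  rw [phi_eq_sum_vecMulVec]
  exact posSemidef_sum _ fun F _ => star_trivial ((F : Set V).indicator (γ F)) ▸
    posSemidef_vecMulVec_self_star _

lemma dotProduct_phi_mulVec (x : V → ℝ) :
    x ⬝ᵥ phi Δ γ *ᵥ x = ∑ F ∈ Δ, ((F : Set V).indicator (γ F) ⬝ᵥ x) ^ 2 := by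
  simp [phi_eq_sum_vecMulVec, Matrix.sum_mulVec, dotProduct_sum, dotProduct_vecMulVec_self_mulVec]

lemma phi_update {F : Finset V} (hF : F ∈ Δ) (v : V → ℝ) :
    phi Δ (Function.update γ F v) = phi Δ γ
      - vecMulVec ((F : Set V).indicator (γ F)) ((F : Set V).indicator (γ F))
      + vecMulVec ((F : Set V).indicator v) ((F : Set V).indicator v) := by
  simp only [phi_eq_sum_vecMulVec, ← Finset.add_sum_erase Δ _ hF, Function.update_self]
  rw [Finset.sum_congr rfl fun G hG => by rw [Function.update_of_ne (Finset.ne_of_mem_erase hG)]]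
  abel

lemma apply_eq_zero_of_phi_apply_self_eq_zero {F : Finset V} (hF : F ∈ Δ) {p : V} (hp : p ∈ F)
    (h : phi Δ γ p p = 0) : γ F p = 0 := by
  simp only [phi, of_apply, and_self] at h
  have hterm := (Finset.sum_eq_zero_iff_of_nonneg fun F _ =>
    ite_nonneg (mul_self_nonneg (γ F p)) le_rfl).1 h F hF
  simpa [hp] using hterm

lemma phi_apply_nonpos (hΔ : ∀ F ∈ Δ, #F ≤ 2) {p q : V} (hpq : p ≠ q)
    (h : 1 ⬝ᵥ phi Δ γ *ᵥ 1 = 0) : phi Δ γ p q ≤ 0 := by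
  rw [dotProduct_phi_mulVec, Finset.sum_eq_zero_iff_of_nonneg fun _ _ => sq_nonneg _] at h
  refine Finset.sum_nonpos fun F hF => ?_
  split_ifs with hpqF
  · obtain rfl : F = {p, q} := (Finset.eq_of_subset_of_card_le (by simp [insert_subset_iff, hpqF])
      (by simpa [card_pair hpq] using hΔ F hF)).symm
    have hsum : γ {p, q} p + γ {p, q} q = 0 := by
      have := pow_eq_zero_iff two_ne_zero |>.1 (h _ hF)
      rwa [dotProduct_one, Finset.sum_indicator_subset _ (Finset.subset_univ _),
        Finset.sum_pair hpq] at this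
    rw [show γ {p, q} q = -γ {p, q} p by linarith]
    nlinarith [sq_nonneg (γ {p, q} p)]
  · exact le_rfl

lemma diagonal_mem_phiImage (hΔ : ∀ i, {i} ∈ Δ) {d : V → ℝ} (hd : 0 ≤ d) :
    diagonal d ∈ phiImage Δ := by
  refine ⟨fun F i => if F = {i} then √(d i) else 0, ?_⟩
  ext i j
  rw [phi, of_apply, Finset.sum_eq_single_of_mem {i} (hΔ i) fun F _ hF => by simp [hF]]
  by_cases hij : i = j
  · simp [hij, Real.mul_self_sqrt (hd j)]
  · simp [hij, Ne.symm hij]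

lemma phi_add_vecMulVec_mem_phiImage {p q : V} (hpq : p ≠ q) (hpqΔ : {p, q} ∈ Δ) (hqΔ : {q} ∈ Δ)
    (hγ : γ {p, q} p = 0) {c : V → ℝ} (hc : ∀ i ∉ ({p, q} : Finset V), c i = 0) :
    phi Δ γ + vecMulVec c c ∈ phiImage Δ := by
  set a := γ {p, q} q
  set g := γ {q} q
  have hne : ({q} : Finset V) ≠ {p, q} := fun h =>
    hpq (Finset.mem_singleton.1 (h ▸ Finset.mem_insert_self p {q}))
  have hsingle (x : ℝ) : vecMulVec (Pi.single q x) (Pi.single q x) =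
      x ^ 2 • vecMulVec (Pi.single q 1) (Pi.single q 1) := by
    ext i j
    simp only [vecMulVec_apply, Pi.single_apply, Matrix.smul_apply, smul_eq_mul]
    split_ifs <;> ring
  have hpair : (({p, q} : Finset V) : Set V).indicator (γ {p, q}) = Pi.single q a := by
    ext i
    by_cases hip : i = p
    · simp [hip, hpq, hγ]
    · by_cases hiq : i = q <;> simp [hip, hiq, a]
  have hc' : (({p, q} : Finset V) : Set V).indicator c = c :=
    Set.indicator_eq_self.2 fun i hi => by_contra fun h => hi (hc i (by simpa using h))
  refine ⟨Function.update (Function.update γ {p, q} c) {q} fun _ => √(a ^ 2 + g ^ 2), ?_⟩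
  rw [phi_update hqΔ, phi_update hpqΔ, Function.update_of_ne hne]
  rw [Finset.coe_singleton, Set.indicator_singleton, Set.indicator_singleton, hpair, hc', hsingle a,
    hsingle g, hsingle √(a ^ 2 + g ^ 2), Real.sq_sqrt (by positivity)]
  module

lemma mem_phiImage_of_schurComplement_mem_phiImage {S : Matrix V V ℝ} (hS : S.PosSemidef)
    {p q : V} (hp : S p p ≠ 0) (hpq : p ≠ q) (hpqΔ : {p, q} ∈ Δ) (hqΔ : {q} ∈ Δ)
    (hleaf : ∀ r, r ≠ p → S p r ≠ 0 → r = q) (h : schurComplement S p ∈ phiImage Δ) :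
    S ∈ phiImage Δ := by
  obtain ⟨γ, hγ⟩ := h
  have hγp : γ {p, q} p = 0 := apply_eq_zero_of_phi_apply_self_eq_zero hpqΔ
    (Finset.mem_insert_self p {q}) (hγ ▸ schurComplement_apply_pivot_left hp p)
  have hdecomp : S = schurComplement S p +
      vecMulVec ((√(S p p))⁻¹ • S p) ((√(S p p))⁻¹ • S p) := by
    rw [smul_vecMulVec, vecMulVec_smul, smul_smul, ← sq, inv_pow, Real.sq_sqrt hS.diag_nonneg,
      schurComplement, sub_add_cancel]
  rw [hdecomp, ← hγ]
  refine phi_add_vecMulVec_mem_phiImage hpq hpqΔ hqΔ hγp fun r hr => ?_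
  obtain ⟨hrp, hrq⟩ : r ≠ p ∧ r ≠ q := by simpa using hr
  simp [not_imp_comm.1 (hleaf r hrp) hrq]

end Phi

section Cone

variable {V : Type*} [Fintype V] {G : SimpleGraph V}

lemma mem_psdCone_iff {S : Matrix V V ℝ} :
    S ∈ psdCone G ↔ S.PosSemidef ∧ S.supportGraph ≤ G := by
  refine and_congr_right fun _ => ⟨fun h i j hij => ?_, fun h i j hij hadj => ?_⟩
  · rw [supportGraph, fromRel_adj] at hij
    by_contra hadj
    exact hij.2.elim (· (h i j hij.1 hadj)) (· (h j i hij.1.symm fun h' => hadj h'.symm))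
  · by_contra hS
    exact hadj (h ((fromRel_adj _ _ _).2 ⟨hij, Or.inl hS⟩))

variable [DecidableEq V] {Δ : Finset (Finset V)}

lemma phiImage_subset_psdCone (hΔ : ∀ F ∈ Δ, G.IsClique (F : Set V)) :
    phiImage Δ ⊆ psdCone G := by
  rintro _ ⟨γ, rfl⟩
  refine ⟨phi_posSemidef Δ γ, fun i j hij hadj => Finset.sum_eq_zero fun F hF => if_neg ?_⟩
  exact fun ⟨hi, hj⟩ => hadj (hΔ F hF hi hj hij)

theorem psdCone_subset_phiImage (hG : G.IsAcyclic) (hsing : ∀ i, {i} ∈ Δ)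
    (hedge : ∀ i j, G.Adj i j → {i, j} ∈ Δ) : psdCone G ⊆ phiImage Δ := by
  intro S hS
  induction hH : S.supportGraph using WellFoundedLT.induction generalizing S with
  | _ H ih =>
  subst hH
  obtain ⟨hpsd, hle⟩ := mem_psdCone_iff.1 hS
  have hsymm : S.IsSymm := isHermitian_iff_isSymm.1 hpsd.isHermitian
  rcases eq_or_ne S.supportGraph ⊥ with hbot | hbot
  · rw [eq_diagonal_of_supportGraph_eq_bot hbot]
    exact diagonal_mem_phiImage hsing fun i => hpsd.diag_nonneg
  obtain ⟨a, b, hab⟩ := ne_bot_iff_exists_adj.1 hbot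
  obtain ⟨p, q, hadj, hleaf⟩ := (hG.anti hle).exists_adj_forall_adj_eq hab
  obtain ⟨hpq, hSpq⟩ := (supportGraph_adj_iff hsymm).1 hadj
  have hleaf' (r : V) (hr : r ≠ p) (hSr : S p r ≠ 0) : r = q :=
    hleaf r ((supportGraph_adj_iff hsymm).2 ⟨hr.symm, hSr⟩)
  have hp : S p p ≠ 0 := fun h => hSpq (hpsd.apply_eq_zero_of_apply_self_eq_zero h q)
  have hlt := supportGraph_schurComplement_lt hsymm hp hpq hSpq hleaf'
  exact mem_phiImage_of_schurComplement_mem_phiImage hpsd hp hpq (hedge p q (hle hadj)) (hsing q)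
    hleaf' (ih _ hlt (mem_psdCone_iff.2 ⟨hpsd.schurComplement p, hlt.le.trans hle⟩) rfl)

theorem exists_mem_psdCone_not_mem_phiImage (hΔ : ∀ F ∈ Δ, #F ≤ 2) (hG : ¬ G.IsAcyclic) :
    ∃ S ∈ psdCone G, S ∉ phiImage Δ := by
  obtain ⟨v, w, hw⟩ : ∃ v, ∃ w : G.Walk v v, w.IsCycle := by simpa [IsAcyclic] using hG
  obtain ⟨T, d₀, hsum, hedge⟩ := hw.exists_sum_signedIncVec
  refine ⟨cycleMatrix T d₀, ⟨cycleMatrix_posSemidef hsum, fun i j => cycleMatrix_apply_eq_zero⟩, ?_⟩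
  rintro ⟨γ, hγ⟩
  have := phi_apply_nonpos hΔ d₀.adj.ne (γ := γ) (hγ ▸ one_dotProduct_cycleMatrix_mulVec_one)
  rw [hγ, cycleMatrix_apply_fst_snd hedge] at this
  exact one_pos.not_ge this

end Cone

/-- for the edge complex `Δ` of a graph `G` (faces: the empty set,
the singletons, and the edges of `G`), the map `φ_Δ` is surjective onto
`S⪰0^m(G)` if and only if `G` is a forest. -/
theorem edge_complex_surjective_iff_forest (m : ℕ) (G : SimpleGraph (Fin m))
    (Δ : Finset (Finset (Fin m)))
    (hΔ : ∀ F : Finset (Fin m), F ∈ Δ ↔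
      (F = ∅ ∨ (∃ i, F = {i}) ∨ ∃ i j, G.Adj i j ∧ F = ({i, j} : Finset (Fin m)))) :
    phiImage Δ = psdCone G ↔ G.IsAcyclic := by
  have hcard (F) (hF : F ∈ Δ) : #F ≤ 2 := by
    rcases (hΔ F).1 hF with rfl | ⟨i, rfl⟩ | ⟨i, j, -, rfl⟩
    all_goals simp [Finset.card_le_two]
  have hclique (F) (hF : F ∈ Δ) : G.IsClique (F : Set (Fin m)) := by
    rcases (hΔ F).1 hF with rfl | ⟨i, rfl⟩ | ⟨i, j, hij, rfl⟩
    · simp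
    · simp
    · simpa [isClique_pair] using fun _ => hij
  refine ⟨fun h => by_contra fun hG => ?_, fun hG => (phiImage_subset_psdCone hclique).antisymm
    (psdCone_subset_phiImage hG (fun i => (hΔ _).2 (.inr (.inl ⟨i, rfl⟩)))
      fun i j hij => (hΔ _).2 (.inr (.inr ⟨i, j, hij, rfl⟩)))⟩
  obtain ⟨S, hS, hnot⟩ := exists_mem_psdCone_not_mem_phiImage hcard hG
  exact hnot (h ▸ hS)
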